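/- arXiv:1306.2015 — 2 statements merged into one kernel-verified Lean document; each statement's English description precedes it below -/
import Mathlib

section
/- Existence of the binary variables in the divisible case (Lemmas 5 and 6): Let K ≥ 1 and d ≥ 1 be integers, let Ω be a set of ordered pairs (j,i) with j,i ∈ {1,…,K}, and for each j let n_j ∈ ℕ and u_j ∈ ℕ with d ∣ u_j, and for each i let v_i ∈ ℕ. Define the expanded index set Ω̄ = {(j,i,p,q) : (j,i) ∈ Ω, 1 ≤ p ≤ n_j, 1 ≤ q ≤ d}. Suppose that for every subset Ω̄_sub ⊆ Ω̄ one has ∑_{(j,p) : ∃(i,q), (j,i,p,q) ∈ Ω̄_sub} u_j + ∑_{(i,q) : ∃(j,p), (j,i,p,q) ∈ Ω̄_sub} v_i ≥ |Ω̄_sub|, where the first sum runs over the distinct pairs (j,p) appearing in Ω̄_sub and the second over the distinct pairs (i,q) appearing in Ω̄_sub. Then there exist functions bᵗ, bʳ : Ω̄ → {0,1} such that: (i) bᵗ(e) + bʳ(e) = 1 for every e ∈ Ω̄; (ii) for every pair (j,p), ∑_{(i,q) : (j,i,p,q) ∈ Ω̄} bʳ(j,i,p,q) ≤ u_j; (iii)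 for every pair (i,q), ∑_{(j,p) : (j,i,p,q) ∈ Ω̄} bᵗ(j,i,p,q) ≤ v_i; (iv) bᵗ(j,i,p,1) = bᵗ(j,i,p,2) = ⋯ = bᵗ(j,i,p,d) for every (j,i) ∈ Ω and 1 ≤ p ≤ n_j. -/
open Finset

lemma orient {α R C : Type*} [DecidableEq α] [DecidableEq R] [DecidableEq C]
    (E : Finset α) (r : α → R) (c : α → C) (a : R → ℕ) (b : C → ℕ)
    (hall : ∀ T ⊆ E, T.card ≤ ∑ x ∈ T.image r, a x + ∑ x ∈ T.image c, b x) :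
    ∃ g : α → Bool,
      (∀ ρ : R, (E.filter (fun e => r e = ρ ∧ g e = false)).card ≤ a ρ) ∧
      (∀ γ : C, (E.filter (fun e => c e = γ ∧ g e = true)).card ≤ b γ) := by
  classical
  set A : R → Finset ((R × ℕ) ⊕ (C × ℕ)) :=
    fun ρ => (range (a ρ)).image (fun k => Sum.inl (ρ, k)) with hA
  set B : C → Finset ((R × ℕ) ⊕ (C × ℕ)) :=
    fun γ => (range (b γ)).image (fun k => Sum.inr (γ, k)) with hB
  have cardA : ∀ ρ, (A ρ).card = a ρ := by
    intro ρ
    rw [hA, card_image_of_injective _ (fun k k' h => by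
      simpa using h), card_range]
  have cardB : ∀ γ, (B γ).card = b γ := by
    intro γ
    rw [hB, card_image_of_injective _ (fun k k' h => by
      simpa using h), card_range]
  set t : {x // x ∈ E} → Finset ((R × ℕ) ⊕ (C × ℕ)) :=
    fun x => A (r x.1) ∪ B (c x.1) with ht
  have hall' : ∀ s : Finset {x // x ∈ E}, s.card ≤ (s.biUnion t).card := by
    intro s
    set T : Finset α := s.image Subtype.val with hT
    have hTE : T ⊆ E := by
      intro x hx
      rw [hT, mem_image] at hx
      obtain ⟨y, _, rfl⟩ := hx
      exact y.2
    have hcardT : T.card = s.card := card_image_of_injective _ Subtype.val_injective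
    have hunion : s.biUnion t =
        ((T.image r).biUnion A) ∪ ((T.image c).biUnion B) := by
      ext y
      simp only [mem_biUnion, mem_union, mem_image, ht, hT]
      constructor
      · rintro ⟨x, hx, hy | hy⟩
        · exact Or.inl ⟨r x.1, ⟨x.1, ⟨x, hx, rfl⟩, rfl⟩, hy⟩
        · exact Or.inr ⟨c x.1, ⟨x.1, ⟨x, hx, rfl⟩, rfl⟩, hy⟩
      · rintro (⟨ρ, ⟨z, ⟨x, hx, rfl⟩, rfl⟩, hy⟩ | ⟨γ, ⟨z, ⟨x, hx, rfl⟩, rfl⟩, hy⟩)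
        · exact ⟨x, hx, Or.inl hy⟩
        · exact ⟨x, hx, Or.inr hy⟩
    have hdisjAB : Disjoint ((T.image r).biUnion A) ((T.image c).biUnion B) := by
      rw [disjoint_left]
      intro y hy hy'
      rw [mem_biUnion] at hy hy'
      obtain ⟨ρ, _, hy⟩ := hy
      obtain ⟨γ, _, hy'⟩ := hy'
      rw [hA, mem_image] at hy
      rw [hB, mem_image] at hy'
      obtain ⟨k, _, rfl⟩ := hy
      obtain ⟨k', _, h⟩ := hy'
      exact absurd h (by simp)
    have hcardbA : ((T.image r).biUnion A).card = ∑ x ∈ T.image r, a x := by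
      rw [card_biUnion]
      · exact Finset.sum_congr rfl fun x _ => cardA x
      · intro x _ y _ hxy
        rw [Function.onFun, disjoint_left]
        intro z hz hz'
        rw [hA, mem_image] at hz hz'
        obtain ⟨k, _, rfl⟩ := hz
        obtain ⟨k', _, h⟩ := hz'
        apply hxy
        have h2 : (y, k') = (x, k) := by simpa using h
        exact (Prod.ext_iff.mp h2).1.symm
    have hcardbB : ((T.image c).biUnion B).card = ∑ x ∈ T.image c, b x := by
      rw [card_biUnion]
      · exact Finset.sum_congr rfl fun x _ => cardB x
      · intro x _ y _ hxy
        rw [Function.onFun, disjoint_left]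
        intro z hz hz'
        rw [hB, mem_image] at hz hz'
        obtain ⟨k, _, rfl⟩ := hz
        obtain ⟨k', _, h⟩ := hz'
        apply hxy
        have h2 : (y, k') = (x, k) := by simpa using h
        exact (Prod.ext_iff.mp h2).1.symm
    calc s.card = T.card := hcardT.symm
      _ ≤ ∑ x ∈ T.image r, a x + ∑ x ∈ T.image c, b x := hall T hTE
      _ = (s.biUnion t).card := by
          rw [hunion, card_union_of_disjoint hdisjAB, hcardbA, hcardbB]
  obtain ⟨f, hfinj, hft⟩ := (Finset.all_card_le_biUnion_card_iff_exists_injective t).mp hall'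
  refine ⟨fun x => if h : x ∈ E then (f ⟨x, h⟩).isRight else false, ?_, ?_⟩
  · intro ρ
    rw [← cardA ρ]
    apply card_le_card_of_injOn (fun e => if h : e ∈ E then f ⟨e, h⟩ else Sum.inl (ρ, 0))
    · intro e he
      rw [mem_coe, mem_filter] at he
      obtain ⟨heE, hre, hge⟩ := he
      simp only at hge
      rw [dif_pos heE] at hge
      beta_reduce
      rw [dif_pos heE]
      have := hft ⟨e, heE⟩
      rw [ht, mem_union] at this
      rcases this with h | h
      · rwa [← hre]
      · exfalso
        rw [hB, mem_image] at h
        obtain ⟨k, _, hk⟩ := h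
        rw [← hk] at hge
        simp at hge
    · intro e1 h1 e2 h2 heq
      rw [mem_coe, mem_filter] at h1 h2
      simp only at heq
      rw [dif_pos h1.1, dif_pos h2.1] at heq
      exact congrArg Subtype.val (hfinj heq)
  · intro γ
    rw [← cardB γ]
    apply card_le_card_of_injOn (fun e => if h : e ∈ E then f ⟨e, h⟩ else Sum.inr (γ, 0))
    · intro e he
      rw [mem_coe, mem_filter] at he
      obtain ⟨heE, hce, hge⟩ := he
      simp only at hge
      rw [dif_pos heE] at hge
      beta_reduce
      rw [dif_pos heE]
      have := hft ⟨e, heE⟩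
      rw [ht, mem_union] at this
      rcases this with h | h
      · exfalso
        rw [hA, mem_image] at h
        obtain ⟨k, _, hk⟩ := h
        rw [← hk] at hge
        simp at hge
      · rwa [← hce]
    · intro e1 h1 e2 h2 heq
      rw [mem_coe, mem_filter] at h1 h2
      simp only at heq
      rw [dif_pos h1.1, dif_pos h2.1] at heq
      exact congrArg Subtype.val (hfinj heq)


/-- **Existence of the binary variables in the divisible case (Lemmas 5 and 6).**
An element of the expanded index set `Ω̄` is a quadruple `(j, i, p, q)` with `(j,i) ∈ Ω`,
`p < n j` and `q < d`.  If every subset `S ⊆ Ω̄` satisfies the dimension-counting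
inequality `|S| ≤ ∑_{(j,p) appearing in S} u j + ∑_{(i,q) appearing in S} v i`, and
`d ∣ u j` for all `j`, then there exist `{0,1}`-valued assignments `bᵗ, bʳ` on `Ω̄` with
`bᵗ + bʳ = 1`, respecting the receive budgets `u j` and transmit budgets `v i`, and with
`bᵗ(j,i,p,·)` constant in the last coordinate. -/
theorem exists_binary_variables_divisible
    (K d : ℕ) (hK : 1 ≤ K) (hd : 1 ≤ d)
    (Ω : Finset (Fin K × Fin K))
    (n u v : Fin K → ℕ)
    (hdu : ∀ j, d ∣ u j)
    (Ωbar : Finset (Fin K × Fin K × ℕ × ℕ))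
    (hΩbar : ∀ e : Fin K × Fin K × ℕ × ℕ,
      e ∈ Ωbar ↔ (e.1, e.2.1) ∈ Ω ∧ e.2.2.1 < n e.1 ∧ e.2.2.2 < d)
    (hsub : ∀ S ⊆ Ωbar,
      S.card ≤ ∑ x ∈ S.image (fun e => (e.1, e.2.2.1)), u x.1
             + ∑ x ∈ S.image (fun e => (e.2.1, e.2.2.2)), v x.1) :
    ∃ bt br : Fin K × Fin K × ℕ × ℕ → ℕ,
      (∀ e ∈ Ωbar, bt e + br e = 1) ∧
      (∀ (j : Fin K) (p : ℕ),
        ∑ e ∈ Ωbar.filter (fun e => e.1 = j ∧ e.2.2.1 = p), br e ≤ u j) ∧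
      (∀ (i : Fin K) (q : ℕ),
        ∑ e ∈ Ωbar.filter (fun e => e.2.1 = i ∧ e.2.2.2 = q), bt e ≤ v i) ∧
      (∀ (j i : Fin K) (p q q' : ℕ), (j, i) ∈ Ω → p < n j → q < d → q' < d →
        bt (j, i, p, q) = bt (j, i, p, q')) := by
  
  classical
  set proj : Fin K × Fin K × ℕ × ℕ → Fin K × Fin K × ℕ :=
    fun e => (e.1, e.2.1, e.2.2.1) with hproj
  set Ω' : Finset (Fin K × Fin K × ℕ) := Ωbar.image proj with hΩ'def
  have hΩ' : ∀ x : Fin K × Fin K × ℕ, x ∈ Ω' ↔ (x.1, x.2.1) ∈ Ω ∧ x.2.2 < n x.1 := by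
    intro x
    constructor
    · intro hx
      rw [hΩ'def, mem_image] at hx
      obtain ⟨e, he, rfl⟩ := hx
      rw [hΩbar] at he
      exact ⟨he.1, he.2.1⟩
    · intro hx
      rw [hΩ'def, mem_image]
      refine ⟨(x.1, x.2.1, x.2.2, 0), ?_, rfl⟩
      rw [hΩbar]
      exact ⟨hx.1, hx.2, hd⟩
  set emb : (Fin K × Fin K × ℕ) × ℕ → Fin K × Fin K × ℕ × ℕ :=
    fun y => (y.1.1, y.1.2.1, y.1.2.2, y.2) with hemb
  have hembinj : Function.Injective emb := by
    intro y z h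
    simp only [hemb, Prod.mk.injEq] at h
    obtain ⟨h1, h2, h3, h4⟩ := h
    exact Prod.ext (Prod.ext h1 (Prod.ext h2 h3)) h4
  have hall : ∀ T ⊆ Ω', T.card ≤ ∑ x ∈ T.image (fun x => (x.1, x.2.2)), (u x.1 / d)
      + ∑ x ∈ T.image (fun x => x.2.1), v x := by
    intro T hT
    set S : Finset (Fin K × Fin K × ℕ × ℕ) := (T ×ˢ range d).image emb with hS
    have hScard : S.card = T.card * d := by
      rw [hS, card_image_of_injective _ hembinj, card_product, card_range]
    have hSsub : S ⊆ Ωbar := by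
      intro e he
      rw [hS, mem_image] at he
      obtain ⟨y, hy, rfl⟩ := he
      rw [mem_product] at hy
      have hx := (hΩ' y.1).mp (hT hy.1)
      rw [hΩbar]
      exact ⟨hx.1, hx.2, mem_range.mp hy.2⟩
    have key := hsub S hSsub
    have h1 : S.image (fun e => (e.1, e.2.2.1)) ⊆ T.image (fun x => (x.1, x.2.2)) := by
      intro z hz
      rw [mem_image] at hz
      obtain ⟨e, he, rfl⟩ := hz
      rw [hS, mem_image] at he
      obtain ⟨y, hy, rfl⟩ := he
      rw [mem_product] at hy
      rw [mem_image]
      exact ⟨y.1, hy.1, rfl⟩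
    have h2 : S.image (fun e => (e.2.1, e.2.2.2)) ⊆ (T.image (fun x => x.2.1)) ×ˢ range d := by
      intro z hz
      rw [mem_image] at hz
      obtain ⟨e, he, rfl⟩ := hz
      rw [hS, mem_image] at he
      obtain ⟨y, hy, rfl⟩ := he
      rw [mem_product] at hy
      rw [mem_product]
      exact ⟨mem_image.mpr ⟨y.1, hy.1, rfl⟩, hy.2⟩
    have hu' : ∑ x ∈ S.image (fun e => (e.1, e.2.2.1)), u x.1
        ≤ d * ∑ x ∈ T.image (fun x => (x.1, x.2.2)), (u x.1 / d) := by
      calc ∑ x ∈ S.image (fun e => (e.1, e.2.2.1)), u x.1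
          ≤ ∑ x ∈ T.image (fun x => (x.1, x.2.2)), u x.1 :=
            sum_le_sum_of_subset h1
        _ = d * ∑ x ∈ T.image (fun x => (x.1, x.2.2)), (u x.1 / d) := by
            rw [mul_sum]
            refine Finset.sum_congr rfl fun x _ => ?_
            rw [Nat.mul_div_cancel' (hdu x.1)]
    have hv' : ∑ x ∈ S.image (fun e => (e.2.1, e.2.2.2)), v x.1
        ≤ d * ∑ x ∈ T.image (fun x => x.2.1), v x := by
      calc ∑ x ∈ S.image (fun e => (e.2.1, e.2.2.2)), v x.1
          ≤ ∑ x ∈ (T.image (fun x => x.2.1)) ×ˢ range d, v x.1 :=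
            sum_le_sum_of_subset h2
        _ = d * ∑ x ∈ T.image (fun x => x.2.1), v x := by
            rw [Finset.sum_product, mul_sum]
            refine Finset.sum_congr rfl fun x _ => ?_
            simp [mul_comm]
    have hfin : d * T.card ≤ d * (∑ x ∈ T.image (fun x => (x.1, x.2.2)), (u x.1 / d)
        + ∑ x ∈ T.image (fun x => x.2.1), v x) := by
      rw [mul_add]
      calc d * T.card = T.card * d := mul_comm _ _
        _ = S.card := hScard.symm
        _ ≤ _ := key
        _ ≤ _ := Nat.add_le_add hu' hv'
    exact Nat.le_of_mul_le_mul_left hfin hd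
  obtain ⟨g, hrow, hcol⟩ := orient Ω' (fun x => (x.1, x.2.2)) (fun x => x.2.1)
    (fun ρ => u ρ.1 / d) v hall
  refine ⟨fun e => if g (proj e) then 1 else 0, fun e => if g (proj e) then 0 else 1,
    ?_, ?_, ?_, ?_⟩
  · intro e _
    by_cases h : g (proj e) <;> simp [h]
  · -- receive budgets
    intro j p
    have hsum : ∑ e ∈ Ωbar.filter (fun e => e.1 = j ∧ e.2.2.1 = p),
        (if g (proj e) then 0 else 1)
        = ((Ωbar.filter (fun e => e.1 = j ∧ e.2.2.1 = p)).filter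
            (fun e => g (proj e) = false)).card := by
      rw [Finset.card_filter]
      refine Finset.sum_congr rfl fun e _ => ?_
      by_cases h : g (proj e) <;> simp [h]
    rw [hsum, Finset.filter_filter]
    set F := Ωbar.filter (fun e => (e.1 = j ∧ e.2.2.1 = p) ∧ g (proj e) = false) with hF
    have hFsub : F ⊆ ((Ω'.filter (fun x => (x.1, x.2.2) = (j, p) ∧ g x = false))
        ×ˢ range d).image emb := by
      intro e he
      rw [hF, mem_filter] at he
      obtain ⟨heΩ, ⟨hej, hep⟩, hge⟩ := he
      rw [mem_image]
      refine ⟨(proj e, e.2.2.2), ?_, rfl⟩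
      rw [mem_product, mem_filter]
      refine ⟨⟨mem_image.mpr ⟨e, heΩ, rfl⟩, ?_, hge⟩, ?_⟩
      · simp only [hproj]
        rw [Prod.mk.injEq]
        exact ⟨hej, hep⟩
      · rw [mem_range]
        exact ((hΩbar e).mp heΩ).2.2
    calc F.card ≤ (((Ω'.filter (fun x => (x.1, x.2.2) = (j, p) ∧ g x = false))
          ×ˢ range d).image emb).card := card_le_card hFsub
      _ ≤ ((Ω'.filter (fun x => (x.1, x.2.2) = (j, p) ∧ g x = false)) ×ˢ range d).card :=
          card_image_le
      _ = (Ω'.filter (fun x => (x.1, x.2.2) = (j, p) ∧ g x = false)).card * d := by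
          rw [card_product, card_range]
      _ ≤ (u j / d) * d := Nat.mul_le_mul_right d (hrow (j, p))
      _ = u j := Nat.div_mul_cancel (hdu j)
  · -- transmit budgets
    intro i q
    have hsum : ∑ e ∈ Ωbar.filter (fun e => e.2.1 = i ∧ e.2.2.2 = q),
        (if g (proj e) then 1 else 0)
        = ((Ωbar.filter (fun e => e.2.1 = i ∧ e.2.2.2 = q)).filter
            (fun e => g (proj e) = true)).card := by
      rw [Finset.card_filter]
    rw [hsum, Finset.filter_filter]
    have hle : (Ωbar.filter (fun e => (e.2.1 = i ∧ e.2.2.2 = q) ∧ g (proj e) = true)).card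
        ≤ (Ω'.filter (fun x => x.2.1 = i ∧ g x = true)).card := by
      apply card_le_card_of_injOn proj
      · intro e he
        rw [mem_coe, mem_filter] at he
        obtain ⟨heΩ, ⟨hei, _⟩, hge⟩ := he
        rw [mem_coe, mem_filter]
        exact ⟨mem_image.mpr ⟨e, heΩ, rfl⟩, hei, hge⟩
      · intro e1 h1 e2 h2 hpe
        rw [mem_coe, mem_filter] at h1 h2
        have ha := congrArg (fun x : Fin K × Fin K × ℕ => x.1) hpe
        have hb := congrArg (fun x : Fin K × Fin K × ℕ => x.2.1) hpe
        have hc := congrArg (fun x : Fin K × Fin K × ℕ => x.2.2) hpe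
        have hdq : e1.2.2.2 = e2.2.2.2 := by
          rw [h1.2.1.2, h2.2.1.2]
        exact Prod.ext ha (Prod.ext hb (Prod.ext hc hdq))
    exact le_trans hle (hcol i)
  · intro j i p q q' _ _ _ _
    rfl
end

section
/- The feedback-saving ratio bound D_p/D_full ≤ d/M (Section V): Let K ≥ 3, d ≥ 1, and κ be integers with 1 ≤ κ ≤ K−2, and set M = (K−κ)d. Then 2·M·((K+1)d² − Md)(K−1)² ≤ d·K·(K−1)·(K·M² − 2). Equivalently, with D_p = ((K+1)d² − Md)(K−1)² the feedback dimension achieved by the proposed profile and D_full = K(K−1)(KM²/2 − 1) the feedback dimension of full channel direction feedback, one has D_p/D_full ≤ d/M. -/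
/-- **The feedback-saving ratio bound `D_p / D_full ≤ d / M`** (Section V).
With `D_p = ((K+1)d² − Md)(K−1)²` the feedback dimension achieved by the proposed profile
and `D_full = K(K−1)(KM²/2 − 1)` the feedback dimension of full channel direction feedback
in the symmetric network of Theorem 3 (`M = (K−κ)d`), one has `M · D_p ≤ d · D_full`,
stated as an integer inequality after multiplying both sides by `2`. -/
theorem feedback_saving_ratio_bound
    (K κ d M : ℕ) (hK : 3 ≤ K) (hd : 1 ≤ d) (hκ1 : 1 ≤ κ) (hκ2 : κ ≤ K - 2)
    (hM : M = (K - κ) * d) :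
    2 * M * (((K + 1) * d ^ 2 - M * d) * (K - 1) ^ 2)
      ≤ d * K * (K - 1) * (K * M ^ 2 - 2) := by
  obtain ⟨c, hc⟩ : ∃ c, K = κ + c := ⟨K - κ, by omega⟩
  obtain ⟨k, hk⟩ : ∃ k, K = k + 1 := ⟨K - 1, by omega⟩
  have hKc : K - κ = c := by omega
  have hK1 : K - 1 = k := by omega
  have hc2 : 2 ≤ c := by omega
  have hck : c ≤ k := by omega
  have hk2 : 2 ≤ k := by omega
  have hκk : κ + 1 ≤ k := by omega
  subst hM
  rw [hKc, hK1]
  have h1 : (K + 1) * d ^ 2 = (κ + 1) * d ^ 2 + c * d * d := by rw [hc]; ring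
  rw [h1, Nat.add_sub_cancel]
  have hd2 : 1 ≤ d ^ 2 := Nat.one_le_iff_ne_zero.mpr (by positivity)
  have hcc : 2 * c ≤ c * c := Nat.mul_le_mul_right c hc2
  have hcd2 : 2 ≤ c * d ^ 2 := le_trans hc2 (Nat.le_mul_of_pos_right c (by positivity))
  have hA : 2 * (c * d) * ((κ + 1) * d ^ 2 * k ^ 2) ≤ 2 * c * d ^ 3 * k ^ 3 := by
    calc 2 * (c * d) * ((κ + 1) * d ^ 2 * k ^ 2)
        = (κ + 1) * (2 * c * d ^ 3 * k ^ 2) := by ring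
      _ ≤ k * (2 * c * d ^ 3 * k ^ 2) := Nat.mul_le_mul_right _ hκk
      _ = 2 * c * d ^ 3 * k ^ 3 := by ring
  have hB : d * K * k * 2 ≤ 2 * c * k * d ^ 3 * (2 * k + 1) := by
    have h3 : k + 1 ≤ c * d ^ 2 * (2 * k + 1) := by
      calc k + 1 ≤ 2 * (2 * k + 1) := by omega
        _ ≤ c * d ^ 2 * (2 * k + 1) := Nat.mul_le_mul_right _ hcd2
    calc d * K * k * 2 = (k + 1) * (2 * d * k) := by rw [hk]; ring
      _ ≤ c * d ^ 2 * (2 * k + 1) * (2 * d * k) := Nat.mul_le_mul_right _ h3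
      _ = 2 * c * k * d ^ 3 * (2 * k + 1) := by ring
  have key : 2 * (c * d) * ((κ + 1) * d ^ 2 * k ^ 2) + d * K * k * 2
      ≤ d * K * k * (K * (c * d) ^ 2) := by
    calc 2 * (c * d) * ((κ + 1) * d ^ 2 * k ^ 2) + d * K * k * 2
        ≤ 2 * c * d ^ 3 * k ^ 3 + 2 * c * k * d ^ 3 * (2 * k + 1) :=
          Nat.add_le_add hA hB
      _ = (2 * c) * ((k + 1) ^ 2 * k * d ^ 3) := by ring
      _ ≤ (c * c) * ((k + 1) ^ 2 * k * d ^ 3) := Nat.mul_le_mul_right _ hcc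
      _ = d * K * k * (K * (c * d) ^ 2) := by rw [hk]; ring
  have e : d * K * k * (K * (c * d) ^ 2 - 2)
      = d * K * k * (K * (c * d) ^ 2) - d * K * k * 2 := Nat.mul_sub _ _ _
  omega
end
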